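/- Let B_X be the open unit ball of a complex Banach space X and F : B_X → closure(D^n) holomorphic with homogeneous expansion F(z) = a + Σ_{s≥1} P_s(z), where P_s(z) = (1/s!) D^s F(0)(z^s). If |a_j| = ‖a‖_∞ for all j, then ‖P_s(z_0)‖_∞ ≤ 1 - ‖a‖_∞^2 for every s ≥ 1 and every z_0 ∈ ∂B_X. -/

import Mathlib

/-!
Restricting `F` to the complex line `c ↦ c • z₀` and taking a coordinate gives a function `g` on
the unit disc, bounded by `1`, with Taylor coefficients `b 0 = a j` and `b s = P s z₀ j`.
Averaging `g (ω ^ j * c)` over the `s`-th roots of unity keeps only the coefficients `b (s * k)`,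
so `h w = ∑ b (s * k) * w ^ k` again maps the disc into the closed disc. The Schwarz–Pick bound
at the origin, obtained by composing with the Blaschke factor that sends `h 0` to `0`, gives
`‖b s‖ = ‖h' 0‖ ≤ 1 - ‖h 0‖ ^ 2 = 1 - ‖b 0‖ ^ 2`, and `‖a j‖ = ‖a‖` makes these coordinatewise
bounds uniform.
-/

open Metric Finset Set Filter ComplexConjugate

namespace Complex

noncomputable def blaschkeFactor (α w : ℂ) : ℂ := (w - α) / (1 - conj α * w)

theorem normSq_one_sub_conj_mul_sub_normSq_sub (α w : ℂ) :
    normSq (1 - conj α * w) - normSq (w - α) = (1 - normSq α) * (1 - normSq w) := by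
  simp only [normSq_apply, sub_re, sub_im, mul_re, mul_im, one_re, one_im, conj_re, conj_im]
  ring

variable {α w : ℂ}

theorem one_sub_conj_mul_ne_zero (hα : ‖α‖ < 1) (hw : ‖w‖ ≤ 1) : 1 - conj α * w ≠ 0 := by
  intro h
  have : ‖conj α * w‖ < 1 := by
    rw [norm_mul, RCLike.norm_conj]
    nlinarith [norm_nonneg α, norm_nonneg w]
  rw [← eq_of_sub_eq_zero h, norm_one] at this
  exact this.false

theorem norm_blaschkeFactor_le_one (hα : ‖α‖ < 1) (hw : ‖w‖ ≤ 1) :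
    ‖blaschkeFactor α w‖ ≤ 1 := by
  rw [blaschkeFactor, norm_div, div_le_one (norm_pos_iff.2 (one_sub_conj_mul_ne_zero hα hw)),
    ← sq_le_sq₀ (norm_nonneg _) (norm_nonneg _), Complex.sq_norm, Complex.sq_norm, ← sub_nonneg,
    normSq_one_sub_conj_mul_sub_normSq_sub, ← Complex.sq_norm, ← Complex.sq_norm]
  exact mul_nonneg (by nlinarith [norm_nonneg α]) (by nlinarith [norm_nonneg w])

theorem blaschkeFactor_self (α : ℂ) : blaschkeFactor α α = 0 := by
  simp [blaschkeFactor]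

theorem differentiableOn_blaschkeFactor (hα : ‖α‖ < 1) :
    DifferentiableOn ℂ (blaschkeFactor α) (closedBall 0 1) :=
  (differentiableOn_id.sub_const α).div ((differentiableOn_const 1).sub
    ((differentiableOn_const _).mul differentiableOn_id))
    fun _ hw => one_sub_conj_mul_ne_zero hα (mem_closedBall_zero_iff.1 hw)

theorem hasDerivAt_blaschkeFactor_self (hα : ‖α‖ < 1) :
    HasDerivAt (blaschkeFactor α) ((1 - ‖α‖ ^ 2 : ℂ)⁻¹) α := by
  have hden := one_sub_conj_mul_ne_zero hα hα.le
  have hconj : conj α * α = ‖α‖ ^ 2 := by rw [mul_comm, mul_conj, normSq_eq_norm_sq]; push_cast; rfl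
  refine (((hasDerivAt_id α).sub_const α).div ((hasDerivAt_const α 1).sub
    ((hasDerivAt_id α).const_mul (conj α))) hden).congr_deriv ?_
  simp only [id, Pi.sub_apply, sub_self, zero_mul, sub_zero, hconj] at hden ⊢
  field_simp

theorem norm_deriv_le_one_sub_sq_of_mapsTo_ball {g : ℂ → ℂ}
    (hd : DifferentiableOn ℂ g (ball 0 1)) (hg : MapsTo g (ball 0 1) (closedBall 0 1)) :
    ‖deriv g 0‖ ≤ 1 - ‖g 0‖ ^ 2 := by
  have h0 : (0 : ℂ) ∈ ball (0 : ℂ) 1 := mem_ball_self one_pos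
  have hgd : HasDerivAt g (deriv g 0) 0 := (hd.differentiableAt (isOpen_ball.mem_nhds h0)).hasDerivAt
  rcases (mem_closedBall_zero_iff.1 (hg h0)).lt_or_eq with hlt | heq
  · set α := g 0
    have hφ := (hasDerivAt_blaschkeFactor_self hlt).comp (0 : ℂ) hgd
    have hSchwarz := norm_deriv_le_one_of_mapsTo_ball
      ((differentiableOn_blaschkeFactor hlt).comp hd hg) (c := 0) ?_ one_pos
    · have hpos : 0 < 1 - ‖α‖ ^ 2 := by nlinarith [norm_nonneg α]
      rwa [hφ.deriv, norm_mul, norm_inv, show (1 - ‖α‖ ^ 2 : ℂ) = ((1 - ‖α‖ ^ 2 : ℝ) : ℂ) by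
        push_cast; ring, norm_real, Real.norm_of_nonneg hpos.le, inv_mul_le_iff₀ hpos, mul_one]
          at hSchwarz
    · intro z hz
      rw [Function.comp_apply, blaschkeFactor_self, mem_closedBall_zero_iff]
      exact norm_blaschkeFactor_le_one hlt (mem_closedBall_zero_iff.1 (hg hz))
  · have hconst : g =ᶠ[nhds 0] fun _ => g 0 :=
      eventually_eq_of_isLocalMax_norm
        (eventually_of_mem (isOpen_ball.mem_nhds h0) fun z hz =>
          hd.differentiableAt (isOpen_ball.mem_nhds hz))
        (eventually_of_mem (isOpen_ball.mem_nhds h0) fun z hz => by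
          simpa [heq] using hg hz)
    simp [hconst.deriv_eq, heq]

end Complex

theorem IsPrimitiveRoot.geom_sum_pow_eq_ite {R : Type*} [CommRing R] [IsDomain R] {ζ : R}
    {k : ℕ} (hζ : IsPrimitiveRoot ζ k) (m : ℕ) :
    ∑ i ∈ range k, (ζ ^ m) ^ i = if k ∣ m then (k : R) else 0 := by
  split_ifs with h
  · simp [(hζ.pow_eq_one_iff_dvd m).2 h]
  · have hne : ζ ^ m - 1 ≠ 0 := sub_ne_zero.2 fun h1 => h ((hζ.pow_eq_one_iff_dvd m).1 h1)
    refine (mul_eq_zero.1 ?_).resolve_right hne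
    rw [geom_sum_mul, ← pow_mul, mul_comm, pow_mul, hζ.pow_eq_one, one_pow, sub_self]

theorem IsPrimitiveRoot.hasSum_comp_mul_left {K : Type*} [Field K] [CharZero K]
    [TopologicalSpace K] [IsTopologicalRing K] {ζ : K} {s : ℕ} (hζ : IsPrimitiveRoot ζ s)
    (hs : s ≠ 0) {f A : ℕ → K} (h : ∀ j ∈ range s, HasSum (fun m => f m * (ζ ^ j) ^ m) (A j)) :
    HasSum (fun k => f (s * k)) ((s : K)⁻¹ * ∑ j ∈ range s, A j) := by
  have hterm : ∀ m, ∑ j ∈ range s, f m * (ζ ^ j) ^ m = if s ∣ m then s * f m else 0 := by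
    intro m
    simp_rw [← pow_mul, mul_comm _ m, pow_mul, ← mul_sum, hζ.geom_sum_pow_eq_ite]
    split_ifs <;> ring
  have hsum := hasSum_sum h
  simp_rw [hterm] at hsum
  rw [← (mul_right_injective₀ hs).hasSum_iff] at hsum
  · have hfun : (fun k => f (s * k)) = fun k => (s : K)⁻¹ * (s * f (s * k)) := by
      simp [hs]
    simpa [hfun] using hsum.mul_left (s : K)⁻¹
  · rintro m hm
    rw [if_neg]
    rintro ⟨k, rfl⟩
    exact hm ⟨k, rfl⟩

theorem FormalMultilinearSeries.hasFPowerSeriesOnBall_ofScalars {c : ℕ → ℂ} {h : ℂ → ℂ}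
    (hc : ∀ w : ℂ, ‖w‖ < 1 → HasSum (fun k => c k * w ^ k) (h w)) :
    HasFPowerSeriesOnBall h (ofScalars ℂ c) 0 1 where
  r_le := by
    refine ENNReal.le_of_forall_nnreal_lt fun r hr => (ofScalars ℂ c).le_radius_of_tendsto
      (l := 0) ?_
    simpa [ofScalars_norm] using (hc r (by simpa using hr)).summable.tendsto_atTop_zero.norm
  r_pos := one_pos
  hasSum := fun {w} hw => by
    simpa [ofScalars_apply_eq, mul_comm] using hc w (by simpa [← ofReal_norm] using hw)

open FormalMultilinearSeries in
theorem norm_coeff_one_le_one_sub_sq {c : ℕ → ℂ} {h : ℂ → ℂ}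
    (hc : ∀ w : ℂ, ‖w‖ < 1 → HasSum (fun k => c k * w ^ k) (h w))
    (hbd : ∀ w : ℂ, ‖w‖ < 1 → ‖h w‖ ≤ 1) :
    ‖c 1‖ ≤ 1 - ‖c 0‖ ^ 2 := by
  have hps := hasFPowerSeriesOnBall_ofScalars hc
  have hd : DifferentiableOn ℂ h (ball 0 1) := by
    simpa [← ENNReal.coe_one, Metric.eball_coe] using hps.differentiableOn
  have := Complex.norm_deriv_le_one_sub_sq_of_mapsTo_ball hd fun w hw =>
    mem_closedBall_zero_iff.2 (hbd w (mem_ball_zero_iff.1 hw))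
  rw [hps.hasFPowerSeriesAt.deriv, ← hps.coeff_zero (fun _ => 0), ofScalars_apply_eq,
    ofScalars_apply_eq] at this
  simpa using this

theorem norm_coeff_le_one_sub_sq {b : ℕ → ℂ} {g : ℂ → ℂ}
    (hg : ∀ c : ℂ, ‖c‖ < 1 → HasSum (fun m => b m * c ^ m) (g c))
    (hbd : ∀ c : ℂ, ‖c‖ < 1 → ‖g c‖ ≤ 1) {s : ℕ} (hs : s ≠ 0) :
    ‖b s‖ ≤ 1 - ‖b 0‖ ^ 2 := by
  obtain ⟨ω, hω⟩ : ∃ ω : ℂ, IsPrimitiveRoot ω s := ⟨_, Complex.isPrimitiveRoot_exp s hs⟩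
  have hrot : ∀ j : ℕ, ∀ c : ℂ, ‖ω ^ j * c‖ = ‖c‖ := fun j c => by
    rw [norm_mul, norm_pow, hω.norm'_eq_one hs, one_pow, one_mul]
  have havg : ∀ c : ℂ, ‖c‖ < 1 → HasSum (fun k => b (s * k) * (c ^ s) ^ k)
      ((s : ℂ)⁻¹ * ∑ j ∈ range s, g (ω ^ j * c)) := by
    intro c hc
    simpa only [pow_mul, mul_assoc] using hω.hasSum_comp_mul_left hs
      (f := fun m => b m * c ^ m) fun j _ => by
        simpa only [mul_pow, mul_comm, mul_assoc] using hg _ ((hrot j c).trans_lt hc)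
  have hroot : ∀ w : ℂ, ‖w‖ < 1 → ∃ c : ℂ, ‖c‖ < 1 ∧ c ^ s = w := fun w hw => by
    obtain ⟨c, rfl⟩ := IsAlgClosed.exists_pow_nat_eq w (Nat.pos_of_ne_zero hs)
    exact ⟨c, by simpa [pow_lt_one_iff_of_nonneg (norm_nonneg c) hs] using hw, rfl⟩
  have hbd_avg : ∀ c : ℂ, ‖c‖ < 1 → ‖(s : ℂ)⁻¹ * ∑ j ∈ range s, g (ω ^ j * c)‖ ≤ 1 := by
    intro c hc
    calc ‖(s : ℂ)⁻¹ * ∑ j ∈ range s, g (ω ^ j * c)‖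
        ≤ (s : ℝ)⁻¹ * ∑ j ∈ range s, ‖g (ω ^ j * c)‖ := by
          rw [norm_mul, norm_inv, Complex.norm_natCast]
          gcongr
          exact norm_sum_le _ _
      _ ≤ (s : ℝ)⁻¹ * ∑ _j ∈ range s, 1 := by
          gcongr with j
          exact hbd _ ((hrot j c).trans_lt hc)
      _ = 1 := by simp [hs]
  have := norm_coeff_one_le_one_sub_sq (c := fun k => b (s * k))
    (h := fun w => ∑' k, b (s * k) * w ^ k) (fun w hw => ?_) (fun w hw => ?_)
  · simpa using this
  · obtain ⟨c, hc, rfl⟩ := hroot w hw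
    exact (havg c hc).summable.hasSum
  · obtain ⟨c, hc, rfl⟩ := hroot w hw
    exact (havg c hc).tsum_eq ▸ hbd_avg c hc

theorem stmt_13_general {X : Type*} [NormedAddCommGroup X] [NormedSpace ℂ X]
    (n : ℕ) (F : X → (Fin n → ℂ)) (a : Fin n → ℂ) (P : ℕ → X → (Fin n → ℂ))
    (hexp : ∀ z ∈ ball (0 : X) 1, HasSum (fun s : ℕ => P (s + 1) z) (F z - a))
    (hhom : ∀ s : ℕ, 1 ≤ s → ∀ (c : ℂ) (z : X), P s (c • z) = c ^ s • P s z)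
    (hbd : ∀ z ∈ ball (0 : X) 1, ‖F z‖ ≤ 1)
    (ha : ∀ j : Fin n, ‖a j‖ = ‖a‖) :
    ∀ s : ℕ, 1 ≤ s → ∀ z₀ : X, ‖z₀‖ = 1 → ‖P s z₀‖ ≤ 1 - ‖a‖ ^ 2 := by
  intro s hs z₀ hz₀
  have hline : ∀ c : ℂ, ‖c‖ < 1 → c • z₀ ∈ ball (0 : X) 1 := fun c hc => by
    rwa [mem_ball_zero_iff, norm_smul, hz₀, mul_one]
  rcases isEmpty_or_nonempty (Fin n) with hn | hn
  · simp [Subsingleton.elim (P s z₀) 0, Subsingleton.elim a 0]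
  refine (pi_norm_le_iff_of_nonempty _).2 fun j => ?_
  set b : ℕ → ℂ := fun m => if m = 0 then a j else P m z₀ j
  have hsum : ∀ c : ℂ, ‖c‖ < 1 → HasSum (fun m => b m * c ^ m) (F (c • z₀) j) := by
    intro c hc
    refine (hasSum_nat_add_iff' 1).1 ?_
    simpa [b, hhom _ (Nat.le_add_left 1 _), mul_comm] using Pi.hasSum.1 (hexp _ (hline c hc)) j
  have := norm_coeff_le_one_sub_sq hsum
    (fun c hc => (norm_le_pi_norm _ j).trans (hbd _ (hline c hc))) (Nat.one_le_iff_ne_zero.1 hs)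
  simpa [b, ha j, Nat.one_le_iff_ne_zero.1 hs] using this

theorem stmt_13 {X : Type*} [NormedAddCommGroup X] [NormedSpace ℂ X] [CompleteSpace X]
    (n : ℕ) (F : X → (Fin n → ℂ)) (a : Fin n → ℂ) (P : ℕ → X → (Fin n → ℂ))
    (hF : DifferentiableOn ℂ F (ball (0 : X) 1))
    (hexp : ∀ z ∈ ball (0 : X) 1, HasSum (fun s : ℕ => P (s + 1) z) (F z - a))
    (hhom : ∀ s : ℕ, 1 ≤ s → ∀ (c : ℂ) (z : X), P s (c • z) = c ^ s • P s z)
    (hbd : ∀ z ∈ ball (0 : X) 1, ‖F z‖ ≤ 1)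
    (ha : ∀ j : Fin n, ‖a j‖ = ‖a‖) :
    ∀ s : ℕ, 1 ≤ s → ∀ z₀ : X, ‖z₀‖ = 1 → ‖P s z₀‖ ≤ 1 - ‖a‖ ^ 2 :=
  stmt_13_general n F a P hexp hhom hbd ha
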